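/- Let R be a commutative ring with involution * and let q ∈ M_n(R) be an idempotent with Tr(q)=1 and all 2×2 minors vanishing. For a ∈ M_n(R) with qa + aq = a, define L_q(a) = 2Tr(q†q)[a†, q] + Tr(a†q)[q, q†], where † is conjugate-transpose. Then L_q(a) satisfies q L_q(a) + L_q(a) q = L_q(a), and L_q²(a) = −4 Tr(q†q)³ a. -/

import Mathlib

/-!
Vanishing of the 2×2 minors makes `q` "rank one": `q x q = Tr(q x) q` for every `x`. Since
`q² = q`, every commutator `[y, q]` is tangent at `q`, which gives the first claim, and a tangent
`a` satisfies `q a q = 0`. The conjugate transpose of `L_q(a)` is again a combination of `[q†, a]`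
and `[q, q†]`, now with coefficient `Tr(q†a) = Tr(a q† q) + Tr(q† a q)`. Expanding `L_q(L_q(a))`
and collapsing every product `q x q` with the rank-one identity leaves `-4 Tr(q†q)³ (q a + a q)`.
Nothing in this computation uses the involution beyond the minors of `q†`, so it is carried out
for an arbitrary `p` with vanishing 2×2 minors in place of `q†`.
-/

open Matrix

/-- The matrix operator `L_q(a) = 2 Tr(q†q)[a†,q] + Tr(a†q)[q,q†]`. -/
def LqMat {R : Type*} [CommRing R] [StarRing R] {n : ℕ}
    (q a : Matrix (Fin n) (Fin n) R) : Matrix (Fin n) (Fin n) R :=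
  (2 * (qᴴ * q).trace) • (aᴴ * q - q * aᴴ) +
    (aᴴ * q).trace • (q * qᴴ - qᴴ * q)

section TangentSpace

variable (R : Type*) {A : Type*} [CommRing R] [NonUnitalRing A] [Module R A]
  [SMulCommClass R A A] [IsScalarTower R A A]

def tangentSpace (q : A) : Submodule R A :=
  LinearMap.ker (LinearMap.mulLeft R q + LinearMap.mulRight R q - LinearMap.id)

variable {R}

theorem mem_tangentSpace {q a : A} : a ∈ tangentSpace R q ↔ q * a + a * q = a := by
  simp [tangentSpace, sub_eq_zero]

theorem commutator_mem_tangentSpace {q : A} (hq : q * q = q) (y : A) :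
    y * q - q * y ∈ tangentSpace R q := by
  have hqqy : q * (q * y) = q * y := by rw [← mul_assoc, hq]
  have hyqq : y * q * q = y * q := by rw [mul_assoc, hq]
  rw [mem_tangentSpace, mul_sub, sub_mul, hqqy, hyqq, ← mul_assoc]
  abel

theorem mul_mul_eq_zero_of_mem_tangentSpace {q a : A} (hq : q * q = q)
    (ha : a ∈ tangentSpace R q) : q * a * q = 0 := by
  rw [mem_tangentSpace] at ha
  have h : q * (q * a + a * q) = q * a := by rw [ha]
  rwa [mul_add, ← mul_assoc, hq, add_eq_left, ← mul_assoc] at h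

end TangentSpace

section TwoMinors

variable {ι R : Type*} [CommRing R]

def TwoMinorsVanish (q : Matrix ι ι R) : Prop :=
  ∀ i j k l, q i k * q j l = q i l * q j k

theorem TwoMinorsVanish.conjTranspose [StarRing R] {q : Matrix ι ι R}
    (hq : TwoMinorsVanish q) : TwoMinorsVanish qᴴ := fun i j k l => by
  simp only [conjTranspose_apply, ← star_mul']
  rw [hq k l i j, mul_comm]

theorem TwoMinorsVanish.mul_mul_eq_trace_smul [Fintype ι] {q : Matrix ι ι R} (hq : TwoMinorsVanish q)
    (x : Matrix ι ι R) : q * x * q = (q * x).trace • q := by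
  ext i l
  simp only [mul_apply, trace, diag_apply, Matrix.smul_apply, smul_eq_mul, Finset.sum_mul]
  refine Finset.sum_congr rfl fun m _ => Finset.sum_congr rfl fun k _ => ?_
  linear_combination x k m * hq i m k l

end TwoMinors

section RankOne

variable {ι R : Type*} [Fintype ι] [CommRing R] {p q a : Matrix ι ι R}

/-- `LqMat q b = LpqMat qᴴ q bᴴ` by definition: the involution enters only through `p = qᴴ`. -/
def LpqMat (p q b : Matrix ι ι R) : Matrix ι ι R :=
  (2 * (p * q).trace) • (b * q - q * b) + (b * q).trace • (q * p - p * q)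

theorem LpqMat_mem_tangentSpace (hq : q * q = q) (p b : Matrix ι ι R) :
    LpqMat p q b ∈ tangentSpace R q := by
  have hqp : q * p - p * q = -(p * q - q * p) := (neg_sub _ _).symm
  rw [LpqMat, hqp]
  exact add_mem (Submodule.smul_mem _ _ (commutator_mem_tangentSpace hq b))
    (Submodule.smul_mem _ _ (neg_mem (commutator_mem_tangentSpace hq p)))

theorem TwoMinorsVanish.tangent_mul_mul (hqm : TwoMinorsVanish q) (ha : a ∈ tangentSpace R q) :
    a * p * q = (a * p * q).trace • q + (p * q).trace • (a * q) := by
  rw [mem_tangentSpace] at ha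
  calc a * p * q = q * (a * p) * q + a * (q * p * q) := by
        conv_lhs => rw [← ha]
        simp only [add_mul, mul_assoc]
    _ = (a * p * q).trace • q + (p * q).trace • (a * q) := by
        rw [hqm.mul_mul_eq_trace_smul, hqm.mul_mul_eq_trace_smul, trace_mul_comm q, trace_mul_comm q, mul_smul_comm]

theorem TwoMinorsVanish.mul_mul_tangent (hqm : TwoMinorsVanish q) (ha : a ∈ tangentSpace R q) :
    q * p * a = (p * q).trace • (q * a) + (p * a * q).trace • q := by
  rw [mem_tangentSpace] at ha
  calc q * p * a = q * p * q * a + q * (p * a) * q := by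
        conv_lhs => rw [← ha]
        simp only [mul_add, mul_assoc]
    _ = (p * q).trace • (q * a) + (p * a * q).trace • q := by
        rw [hqm.mul_mul_eq_trace_smul, hqm.mul_mul_eq_trace_smul, trace_mul_comm q, trace_mul_comm q, smul_mul_assoc]

theorem trace_mul_smul_mul_tangent_mul (hq : q * q = q) (hqm : TwoMinorsVanish q) (hpm : TwoMinorsVanish p)
    (ha : a ∈ tangentSpace R q) : (p * q).trace • (p * a * q) = (p * a * q).trace • (p * q) := by
  have hqaq := mul_mul_eq_zero_of_mem_tangentSpace hq ha
  calc (p * q).trace • (p * a * q) = p * (q * p * a) * q := by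
        rw [← smul_mul_assoc, ← smul_mul_assoc, ← hpm.mul_mul_eq_trace_smul]
        simp only [mul_assoc]
    _ = (p * q).trace • (p * (q * a * q)) + (p * a * q).trace • (p * (q * q)) := by
        rw [hqm.mul_mul_tangent ha]
        simp only [mul_add, add_mul, mul_smul_comm, smul_mul_assoc, mul_assoc]
    _ = (p * a * q).trace • (p * q) := by rw [hqaq, hq, mul_zero, smul_zero, zero_add]

theorem trace_mul_smul_mul_tangent_mul_rev (hq : q * q = q) (hqm : TwoMinorsVanish q) (hpm : TwoMinorsVanish p)
    (ha : a ∈ tangentSpace R q) : (p * q).trace • (q * a * p) = (a * p * q).trace • (q * p) := by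
  have hqaq := mul_mul_eq_zero_of_mem_tangentSpace hq ha
  calc (p * q).trace • (q * a * p) = q * (a * p * q) * p := by
        rw [← mul_smul_comm, ← hpm.mul_mul_eq_trace_smul]
        simp only [mul_assoc]
    _ = (a * p * q).trace • (q * q * p) + (p * q).trace • (q * a * q * p) := by
        conv_lhs => rw [hqm.tangent_mul_mul ha]
        simp only [mul_add, add_mul, mul_smul_comm, smul_mul_assoc, mul_assoc]
    _ = (a * p * q).trace • (q * p) := by rw [hqaq, hq, zero_mul, smul_zero, add_zero]

theorem trace_mul_tangent (ha : a ∈ tangentSpace R q) :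
    (p * a).trace = (a * p * q).trace + (p * a * q).trace := by
  rw [mem_tangentSpace] at ha
  conv_lhs => rw [← ha]
  rw [mul_add, trace_add, ← mul_assoc, trace_mul_cycle, ← mul_assoc]

theorem LpqMat_eq_neg_smul (hq : q * q = q) (hqm : TwoMinorsVanish q) (hpm : TwoMinorsVanish p)
    (ha : a ∈ tangentSpace R q) {M : Matrix ι ι R}
    -- for `p = qᴴ`, `M` is `(LqMat q a)ᴴ`, see `conjTranspose_LqMat`
    (hM : M = (2 * (p * q).trace) • (p * a - a * p) + (p * a).trace • (q * p - p * q)) :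
    LpqMat p q M = (-(4 * (p * q).trace ^ 3)) • a := by
  have hpaq := trace_mul_smul_mul_tangent_mul hq hqm hpm ha
  have hqap := trace_mul_smul_mul_tangent_mul_rev hq hqm hpm ha
  have hapq := hqm.tangent_mul_mul (p := p) ha
  have hqpa := hqm.mul_mul_tangent (p := p) ha
  have hqpq : q * p * q = (p * q).trace • q := by rw [hqm.mul_mul_eq_trace_smul, trace_mul_comm]
  have hpqq : p * q * q = p * q := by rw [mul_assoc, hq]
  rw [trace_mul_tangent ha] at hM
  rw [LpqMat]
  set τ := (p * q).trace
  set α := (p * a * q).trace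
  set β := (a * p * q).trace
  have hMq : (M * q).trace = 2 * τ * (α - β) := by
    have hqpq' : (q * p * q).trace = (p * q * q).trace := by rw [mul_assoc, trace_mul_comm]
    rw [hM]
    simp only [add_mul, sub_mul, smul_mul_assoc, trace_add, trace_smul, trace_sub, smul_eq_mul,
      hqpq']
    ring
  rw [mem_tangentSpace] at ha
  rw [hMq, hM]
  simp only [add_mul, mul_add, sub_mul, mul_sub, smul_mul_assoc, mul_smul_comm, smul_add,
    smul_sub, ← mul_assoc, hq, hapq, hqpa, hqpq, hpqq]
  linear_combination (norm := module) (4 * τ) • hpaq + (4 * τ) • hqap + (-(4 * τ ^ 3)) • ha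

end RankOne

theorem conjTranspose_LqMat {R : Type*} [CommRing R] [StarRing R] {n : ℕ}
    (q a : Matrix (Fin n) (Fin n) R) :
    (LqMat q a)ᴴ = (2 * (qᴴ * q).trace) • (qᴴ * a - a * qᴴ) + (qᴴ * a).trace • (q * qᴴ - qᴴ * q) := by
  have hτ : star (qᴴ * q).trace = (qᴴ * q).trace := by
    rw [← trace_conjTranspose, conjTranspose_mul, conjTranspose_conjTranspose]
  have hc : star (aᴴ * q).trace = (qᴴ * a).trace := by
    rw [← trace_conjTranspose, conjTranspose_mul, conjTranspose_conjTranspose]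
  simp only [LqMat, conjTranspose_add, conjTranspose_smul, conjTranspose_sub, conjTranspose_mul,
    conjTranspose_conjTranspose, star_mul', star_ofNat, hτ, hc]

theorem stmt_13_general {R : Type*} [CommRing R] [StarRing R] {n : ℕ}
    (q a : Matrix (Fin n) (Fin n) R)
    (hq : q * q = q)
    (hminor : ∀ i j k l, q i k * q j l = q i l * q j k)
    (ha : q * a + a * q = a) :
    q * LqMat q a + LqMat q a * q = LqMat q a ∧
      LqMat q (LqMat q a) = (-(4 * (qᴴ * q).trace ^ 3)) • a :=
  ⟨mem_tangentSpace.1 (LpqMat_mem_tangentSpace hq qᴴ aᴴ),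
    LpqMat_eq_neg_smul hq hminor (TwoMinorsVanish.conjTranspose hminor) (mem_tangentSpace.2 ha)
      (conjTranspose_LqMat q a)⟩

/-- for an idempotent `q` with `Tr q = 1` and vanishing 2×2
minors, and a tangent vector `a` at `q`, `L_q(a)` is tangent at `q` and
`L_q²(a) = −4 Tr(q†q)³ a`. -/
theorem stmt_13 {R : Type*} [CommRing R] [StarRing R] {n : ℕ}
    (q a : Matrix (Fin n) (Fin n) R)
    (hq : q * q = q) (htr : q.trace = 1)
    (hminor : ∀ i j k l, q i k * q j l = q i l * q j k)
    (ha : q * a + a * q = a) :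
    q * LqMat q a + LqMat q a * q = LqMat q a ∧
      LqMat q (LqMat q a) = (-(4 * (qᴴ * q).trace ^ 3)) • a :=
  stmt_13_general q a hq hminor ha
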